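/- arXiv:2312.01333 — 2 statements merged into one kernel-verified Lean document; each statement's English description precedes it below -/
import Mathlib

section
/- For every nonempty finite set A, the number of injective finite sequences of elements of A is strictly greater than the number of partitions of A. -/
/-!
Partitions of `A` are equivalence relations on `A`. Listing `A` as `a₀ < ⋯ < aₙ₋₁`, an
equivalence relation is determined by the map sending each `aᵢ` to the least element of its
class, which is some `aⱼ` with `j ≤ i`; hence there are at most `n!` of them. On the other
side, the `n!` enumerations of `A` are injective sequences, and the empty sequence is one more.
-/

open Finset Nat

namespace Setoid

variable {α : Type*} [LinearOrder α] [WellFoundedLT α]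

noncomputable def classMin (s : Setoid α) (a : α) : α :=
  wellFounded_lt.min {b | s b a} ⟨a, s.refl a⟩

theorem classMin_rel (s : Setoid α) (a : α) : s (s.classMin a) a :=
  wellFounded_lt.min_mem {b | s b a} _

theorem classMin_le (s : Setoid α) (a : α) : s.classMin a ≤ a :=
  wellFounded_lt.min_le (s := {b | s b a}) (s.refl a)

theorem classMin_eq_classMin_iff (s : Setoid α) {a b : α} :
    s.classMin a = s.classMin b ↔ s a b := by
  refine ⟨fun h => s.trans (s.symm (s.classMin_rel a)) (h ▸ s.classMin_rel b), fun h => ?_⟩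
  have : {c | s c a} = {c | s c b} := Set.ext fun c => ⟨(s.trans · h), (s.trans · (s.symm h))⟩
  simp only [classMin, this]

theorem classMin_injective : Function.Injective (classMin : Setoid α → α → α) :=
  fun _ _ h => Setoid.ext fun a b => by
    rw [← classMin_eq_classMin_iff, ← classMin_eq_classMin_iff, h]

theorem card_le_card_pi_Iic [Finite α] :
    Nat.card (Setoid α) ≤ Nat.card ((a : α) → Set.Iic a) :=
  Nat.card_le_card_of_injective (fun s a => ⟨s.classMin a, s.classMin_le a⟩)
    fun _ _ h => classMin_injective <| funext fun a => congrArg Subtype.val (congrFun h a)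

end Setoid

def Equiv.setoidCongr {α β : Type*} (e : α ≃ β) : Setoid α ≃ Setoid β where
  toFun := Setoid.comap e.symm
  invFun := Setoid.comap e
  left_inv s := Setoid.ext fun a b => by simp [Setoid.comap_rel]
  right_inv s := Setoid.ext fun a b => by simp [Setoid.comap_rel]

theorem Fin.card_pi_Iic (n : ℕ) : Nat.card ((i : Fin n) → Set.Iic i) = n ! := by
  simp [Fin.prod_univ_eq_prod_range (· + 1), prod_range_add_one_eq_factorial]

theorem Setoid.card_le_factorial_card (α : Type*) [Finite α] :
    Nat.card (Setoid α) ≤ (Nat.card α)! :=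
  calc Nat.card (Setoid α) = Nat.card (Setoid (Fin (Nat.card α))) :=
        Nat.card_congr (Finite.equivFin α).setoidCongr
    _ ≤ Nat.card ((i : Fin (Nat.card α)) → Set.Iic i) := Setoid.card_le_card_pi_Iic
    _ = (Nat.card α)! := Fin.card_pi_Iic _

theorem List.factorial_card_lt_card_nodup (α : Type*) [Finite α] [Nonempty α] :
    (Nat.card α)! < Nat.card {l : List α // l.Nodup} := by
  classical
  have := Fintype.ofFinite α
  let l := (univ : Finset α).toList
  have mem_l (a : α) : a ∈ l := mem_toList.2 (mem_univ a)
  let f (σ : Equiv.Perm α) : {l : List α // l.Nodup} := ⟨l.map σ, (nodup_toList _).map σ.injective⟩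
  have hf : Function.Injective f := fun σ τ h =>
    Equiv.ext fun a => List.map_eq_map_iff.1 (congrArg Subtype.val h) a (mem_l a)
  have nil_notMem : ⟨[], List.nodup_nil⟩ ∉ Set.range f := by
    rintro ⟨σ, hσ⟩
    exact List.ne_nil_of_mem (mem_l (Classical.arbitrary α))
      (List.map_eq_nil_iff.1 (congrArg Subtype.val hσ))
  rw [← Nat.card_perm, Nat.card_eq_fintype_card, Nat.card_eq_fintype_card]
  exact Fintype.card_lt_of_injective_not_surjective f hf fun h => nil_notMem (h _)

theorem seq_inj_gt_part (A : Type*) [Finite A] [Nonempty A] :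
    Nat.card {l : List A // l.Nodup} >
      Nat.card {P : Set (Set A) // Setoid.IsPartition P} :=
  calc Nat.card {P : Set (Set A) // Setoid.IsPartition P} = Nat.card (Setoid A) :=
        (Nat.card_congr (Setoid.Partition.orderIso A).toEquiv).symm
    _ ≤ (Nat.card A)! := Setoid.card_le_factorial_card A
    _ < Nat.card {l : List A // l.Nodup} := List.factorial_card_lt_card_nodup A
end

section
/- For every infinite set A, the cardinality of the set of partitions of A all of whose members are finite equals the cardinality of the power set of A: |Part_fin(A)| = 2^{|A|}. -/
/-!
A family of finite subsets of an infinite `A` is a subset of `Finset A`, which has cardinality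
`|A|`, so there are at most `2 ^ |A|` of them. Conversely, identify `A` with `A × Bool`: every
`S ⊆ A` yields the partition into the pairs `{(a, false), (a, true)}` for `a ∈ S` and singletons
otherwise, and `S` is recovered from it.
-/

open Cardinal Set

theorem mk_families_of_finite_sets_le (α : Type*) [Infinite α] :
    #{P : Set (Set α) // ∀ s ∈ P, s.Finite} ≤ 2 ^ #α := by
  have hrange {P : Set (Set α)} (hP : ∀ s ∈ P, s.Finite) :
      P ⊆ range ((↑) : Finset α → Set α) := fun s hs => ⟨(hP s hs).toFinset, by simp⟩
  calc #{P : Set (Set α) // ∀ s ∈ P, s.Finite}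
      ≤ #(Set (Finset α)) := mk_le_of_injective (f := fun P => ((↑) : Finset α → Set α) ⁻¹' P.1)
        fun P Q h => Subtype.ext <| by
          rw [← image_preimage_eq_of_subset (hrange P.2), ← image_preimage_eq_of_subset (hrange Q.2)]
          exact congrArg _ h
    _ = 2 ^ #α := by rw [mk_set, mk_finset_of_infinite]

theorem Setoid.finite_of_mem_classes_ker {α β : Type*} {f : α → β}
    (hf : ∀ b, (f ⁻¹' {b}).Finite) {s : Set α} (hs : s ∈ (Setoid.ker f).classes) : s.Finite := by
  obtain ⟨b, rfl⟩ := Setoid.classes_ker_subset_fiber_set f hs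
  exact hf b

/-- Glues `e.symm (a, false)` to `e.symm (a, true)` exactly when `a ∈ S`. -/
def glueAlong {α : Type*} (e : α ≃ α × Bool) (S : Set α) : α → α × Prop :=
  fun x => ((e x).1, (e x).2 = true ∧ (e x).1 ∉ S)

section glueAlong

variable {α : Type*} (e : α ≃ α × Bool)

theorem finite_glueAlong_preimage (S : Set α) (y : α × Prop) : (glueAlong e S ⁻¹' {y}).Finite := by
  have hfib : glueAlong e S ⁻¹' {y} ⊆ e ⁻¹' ({y.1} ×ˢ Set.univ) := by
    rintro x rfl
    simp [glueAlong]
  exact (((finite_singleton _).prod finite_univ).preimage e.injective.injOn).subset hfib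

theorem glueAlong_symm_eq_iff (S : Set α) (a : α) :
    glueAlong e S (e.symm (a, false)) = glueAlong e S (e.symm (a, true)) ↔ a ∈ S := by
  simp [glueAlong]

theorem ker_glueAlong_injective : Function.Injective fun S => Setoid.ker (glueAlong e S) := by
  intro S T h
  ext a
  rw [← glueAlong_symm_eq_iff e S, ← glueAlong_symm_eq_iff e T, ← Setoid.ker_def, ← Setoid.ker_def]
  exact Setoid.ext_iff.mp h _ _

end glueAlong

theorem two_pow_mk_le_mk_finite_partitions (α : Type*) [Infinite α] :
    2 ^ #α ≤ #{P : Set (Set α) // Setoid.IsPartition P ∧ ∀ s ∈ P, s.Finite} := by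
  obtain ⟨e⟩ : Nonempty (α ≃ α × Bool) := by
    rw [← Cardinal.eq, mk_prod, mk_bool, lift_uzero, lift_ofNat]
    exact (Cardinal.mul_eq_left (aleph0_le_mk α)
      ((ofNat_lt_aleph0 (n := 2)).le.trans (aleph0_le_mk α)) two_ne_zero).symm
  rw [← mk_set]
  exact mk_le_of_injective (f := fun S => ⟨(Setoid.ker (glueAlong e S)).classes,
    Setoid.isPartition_classes _,
    fun _ => Setoid.finite_of_mem_classes_ker (finite_glueAlong_preimage e S)⟩)
    fun S T h => ker_glueAlong_injective e (Setoid.classes_inj.mpr (congrArg Subtype.val h))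

theorem partFin_eq_two_pow (A : Type*) [Infinite A] :
    Cardinal.mk {P : Set (Set A) // Setoid.IsPartition P ∧ ∀ s ∈ P, s.Finite} =
      2 ^ Cardinal.mk A :=
  le_antisymm ((mk_subtype_mono fun _ hP => hP.2).trans (mk_families_of_finite_sets_le A))
    (two_pow_mk_le_mk_finite_partitions A)
end
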